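/- arXiv:1809.03309 — 5 statements merged into one kernel-verified Lean document; each statement's English description precedes it below -/
import Mathlib

section
/- For every decoding order π, the polyhedral TIN region P_π(𝒦) equals the set of all tuples d ∈ ℝ_{≥0}^𝒦 that satisfy the TIN cyclic system for π. That is, d ∈ ℝ_{≥0}^𝒦 admits a power allocation r ≤ 0 realizing it (in the polyhedral TIN sense) if and only if (i) for every (l,i) ∈ 𝒦, Σ_{s=1}^{l} d_i^{[π_i(s)]} ≤ α_{ii}^{[π_i(l)]}, and (ii) for every m ∈ {2,…,K}, every sequence (i_1,…,i_m) of m distinct cells and every choice l_{i_j} ∈ {1,…,L_{i_j}}, Σ_{j=1}^{m} Σ_{s=1}^{l_{i_j}} d_{i_j}^{[π_{i_j}(s)]} ≤ Σ_{j=1}^{m} (α_{i_j i_j}^{[π_{i_j}(l_{i_j})]} − α_{i_j i_{j−1}}^{[π_{i_j}(l_{i_j})]}) with i_0 = i_m. -/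
open Finset

/-- The set of users `𝒦`: a cell `k : Fin K` together with a user index in `Fin (L k)`. -/
abbrev User {K : ℕ} (L : Fin K → ℕ) := (k : Fin K) × Fin (L k)

/-- The cyclically previous index in `Fin m` (i.e. `j - 1` modulo `m`). -/
def prevIdx {m : ℕ} (j : Fin m) : Fin m :=
  ⟨(j.val + (m - 1)) % m, Nat.mod_lt _ j.pos⟩

/-- The cyclically next index in `Fin m` (i.e. `j + 1` modulo `m`). -/
def nextIdx {m : ℕ} (j : Fin m) : Fin m :=
  ⟨(j.val + 1) % m, Nat.mod_lt _ j.pos⟩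

/-- The identity decoding order. -/
def idOrder {K : ℕ} (L : Fin K → ℕ) : (k : Fin K) → Equiv.Perm (Fin (L k)) :=
  fun _ => Equiv.refl _

/-- The term `max({0} ∪ {r_k^{[π_k(l')]} + α_{kk}^{[π_k(l')]} : l' < l, (π_k(l'),k) ∈ S}
∪ {r_j^{[l_j]} + α_{jk}^{[l_j]} : (l_j,j) ∈ S, j ≠ k})` in the polyhedral TIN constraints
(expressed as a supremum of the corresponding finite nonempty set of reals). -/
noncomputable def innerMax {K : ℕ} (L : Fin K → ℕ)
    (α : (k : Fin K) → Fin (L k) → Fin K → ℝ)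
    (π : (k : Fin K) → Equiv.Perm (Fin (L k)))
    (S : Set (User L)) (r : (k : Fin K) → Fin (L k) → ℝ)
    (k : Fin K) (l : Fin (L k)) : ℝ :=
  sSup (insert (0 : ℝ)
    ({x : ℝ | ∃ l' : Fin (L k), l' < l ∧ (⟨k, π k l'⟩ : User L) ∈ S ∧
        x = r k (π k l') + α k (π k l') k} ∪
     {x : ℝ | ∃ (j : Fin K) (lj : Fin (L j)), j ≠ k ∧ (⟨j, lj⟩ : User L) ∈ S ∧
        x = r j lj + α j lj k}))

/-- The polyhedral TIN region `P_π(S)`: `d` is nonnegative, vanishes outside `S`, and is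
realized by some power allocation `r ≤ 0` on `S`. -/
def polyTIN {K : ℕ} (L : Fin K → ℕ)
    (α : (k : Fin K) → Fin (L k) → Fin K → ℝ)
    (π : (k : Fin K) → Equiv.Perm (Fin (L k)))
    (S : Set (User L))
    (d : (k : Fin K) → Fin (L k) → ℝ) : Prop :=
  (∀ (k : Fin K) (l : Fin (L k)), 0 ≤ d k l) ∧
  (∀ (k : Fin K) (l : Fin (L k)), (⟨k, l⟩ : User L) ∉ S → d k l = 0) ∧
  ∃ r : (k : Fin K) → Fin (L k) → ℝ,
    (∀ (k : Fin K) (l : Fin (L k)), (⟨k, l⟩ : User L) ∈ S → r k l ≤ 0) ∧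
    (∀ (k : Fin K) (l : Fin (L k)), (⟨k, π k l⟩ : User L) ∈ S →
      d k (π k l) ≤ r k (π k l) + α k (π k l) k - innerMax L α π S r k l)

/-- The TIN-achievable region `P*_π` for decoding order `π`: as `P_π(𝒦)` but with the
positive part `max(0, ·)` of the upper bound. -/
def starTIN {K : ℕ} (L : Fin K → ℕ)
    (α : (k : Fin K) → Fin (L k) → Fin K → ℝ)
    (π : (k : Fin K) → Equiv.Perm (Fin (L k)))
    (d : (k : Fin K) → Fin (L k) → ℝ) : Prop :=
  (∀ (k : Fin K) (l : Fin (L k)), 0 ≤ d k l) ∧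
  ∃ r : (k : Fin K) → Fin (L k) → ℝ,
    (∀ (k : Fin K) (l : Fin (L k)), r k l ≤ 0) ∧
    (∀ (k : Fin K) (l : Fin (L k)),
      d k (π k l) ≤ max 0 (r k (π k l) + α k (π k l) k - innerMax L α π Set.univ r k l))

/-- The TIN cyclic system of GDoF inequalities for decoding order `π`:
(i) per-cell MAC-type bounds, and (ii) cyclic bounds over sequences of distinct cells. -/
def cyclicSystem {K : ℕ} (L : Fin K → ℕ)
    (α : (k : Fin K) → Fin (L k) → Fin K → ℝ)
    (π : (k : Fin K) → Equiv.Perm (Fin (L k)))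
    (d : (k : Fin K) → Fin (L k) → ℝ) : Prop :=
  (∀ (k : Fin K) (l : Fin (L k)),
      ∑ s ∈ Finset.Iic l, d k (π k s) ≤ α k (π k l) k) ∧
  (∀ m : ℕ, 2 ≤ m → m ≤ K → ∀ c : Fin m → Fin K, Function.Injective c →
    ∀ lsel : (j : Fin m) → Fin (L (c j)),
      ∑ j, (∑ s ∈ Finset.Iic (lsel j), d (c j) (π (c j) s)) ≤
      ∑ j, (α (c j) (π (c j) (lsel j)) (c j) -
            α (c j) (π (c j) (lsel j)) (c (prevIdx j))))


/-!
Write `D_k(l)` for the prefix sum `∑_{s ≤ l} d_k^{[π_k(s)]}` and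
`x_k(l) = r_k^{[π_k(l)]} + α_{kk}^{[π_k(l)]}` for the received level of the `l`-th decoded user of
cell `k`. The TIN constraints telescope along the decoding order to `D_k(l) ≤ x_k(l) - t` for every
interference level `t` seen at receiver `k`. Taking for `t` the level of the neighbouring cell of a
cycle and summing around it, the powers `r` cancel and the cyclic inequalities appear.

Conversely, the cyclic inequalities say exactly that the weights
`W(j,k) = max_l (D_j(l) - α_{jj}^{[π_j(l)]} + α_{jk}^{[π_j(l)]})` admit no positive simple cycle.
Longest simple paths then give potentials `C` with `C_j + W(j,k) ≤ C_k` and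
`0 ≤ C_k ≤ α_{kk}^{[π_k(l)]} - D_k(l)`, and the allocation with `x_k(l) = C_k + D_k(l)`
realizes `d`.
-/

open Function

lemma prevIdx_nextIdx {m : ℕ} (j : Fin m) : prevIdx (nextIdx j) = j := by
  obtain ⟨v, hv⟩ := j
  simp only [prevIdx, nextIdx, Fin.ext_iff, Nat.mod_add_mod]
  rw [show v + 1 + (m - 1) = v + m by omega, Nat.add_mod_right, Nat.mod_eq_of_lt hv]

lemma nextIdx_prevIdx {m : ℕ} (j : Fin m) : nextIdx (prevIdx j) = j := by
  obtain ⟨v, hv⟩ := j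
  simp only [prevIdx, nextIdx, Fin.ext_iff, Nat.mod_add_mod]
  rw [show v + (m - 1) + 1 = v + m by omega, Nat.add_mod_right, Nat.mod_eq_of_lt hv]

lemma prevIdx_bijective (m : ℕ) : Bijective (prevIdx : Fin m → Fin m) :=
  bijective_iff_has_inverse.mpr ⟨nextIdx, nextIdx_prevIdx, prevIdx_nextIdx⟩

lemma prevIdx_ne {m : ℕ} (hm : 2 ≤ m) (j : Fin m) : prevIdx j ≠ j := by
  obtain ⟨v, hv⟩ := j
  simp only [prevIdx, ne_eq, Fin.ext_iff]
  rcases Nat.eq_zero_or_pos v with rfl | hv0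
  · rw [zero_add, Nat.mod_eq_of_lt (by omega)]; omega
  · rw [show v + (m - 1) = v - 1 + m by omega, Nat.add_mod_right, Nat.mod_eq_of_lt (by omega)]
    omega

lemma prevIdx_zero (n : ℕ) : prevIdx (0 : Fin (n + 1)) = Fin.last n := by
  simp [prevIdx, Fin.ext_iff]

lemma prevIdx_succ {n : ℕ} (i : Fin n) : prevIdx i.succ = i.castSucc := by
  simp only [prevIdx, Fin.ext_iff, Fin.val_succ, Fin.val_castSucc]
  rw [show i.val + 1 + (n + 1 - 1) = i.val + (n + 1) by omega, Nat.add_mod_right,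
    Nat.mod_eq_of_lt (by omega)]

section Potential

variable {ι : Type*} (w : ι → ι → ℝ)

/-- The weight of the path `aₙ → ⋯ → a₁ → a₀` read off the list `[a₀, a₁, …, aₙ]`. -/
def revPathWeight : List ι → ℝ
  | a :: b :: t => w b a + revPathWeight (b :: t)
  | _ => 0

@[simp] lemma revPathWeight_nil : revPathWeight w [] = 0 := rfl

@[simp] lemma revPathWeight_singleton (a : ι) : revPathWeight w [a] = 0 := rfl

@[simp] lemma revPathWeight_cons_cons (a b : ι) (t : List ι) :
    revPathWeight w (a :: b :: t) = w b a + revPathWeight w (b :: t) := rfl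

lemma revPathWeight_append_cons (u : List ι) (b : ι) (v : List ι) :
    revPathWeight w (u ++ b :: v) = revPathWeight w (u ++ [b]) + revPathWeight w (b :: v) := by
  induction u with
  | nil => simp
  | cons a u ih =>
    cases u with
    | nil => simp
    | cons a' u => simp only [List.cons_append, revPathWeight_cons_cons] at ih ⊢; rw [ih]; ring

lemma revPathWeight_ofFn {n : ℕ} (c : Fin (n + 1) → ι) :
    revPathWeight w (List.ofFn c) = ∑ i : Fin n, w (c i.succ) (c i.castSucc) := by
  induction n with
  | zero => simp
  | succ n ih =>
    have h := ih (fun i => c i.succ)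
    rw [Fin.sum_univ_succ, List.ofFn_succ (f := c)]
    simp only [← Fin.succ_castSucc, ← h]
    rw [List.ofFn_succ (f := fun i => c i.succ)]
    rfl

lemma revPathWeight_ofFn_add_eq_sum_prevIdx {n : ℕ} (c : Fin (n + 1) → ι) :
    revPathWeight w (List.ofFn c) + w (c 0) (c (Fin.last n)) = ∑ j, w (c j) (c (prevIdx j)) := by
  rw [Fin.sum_univ_succ, prevIdx_zero, revPathWeight_ofFn, add_comm]
  simp only [prevIdx_succ]

/-- The cycle `c` is traversed along the edges `c j → c (j - 1)`. -/
def NoPositiveCycle : Prop :=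
  ∀ m : ℕ, 2 ≤ m → ∀ c : Fin m → ι, Injective c → ∑ j, w (c j) (c (prevIdx j)) ≤ 0

variable {w}

lemma NoPositiveCycle.revPathWeight_add_le (hw : NoPositiveCycle w) {a b : ι} {t : List ι}
    (ht : (a :: (t ++ [b])).Nodup) : revPathWeight w (a :: (t ++ [b])) + w a b ≤ 0 := by
  have hlast : (a :: (t ++ [b])).get (Fin.last (t ++ [b]).length) = b := by simp
  have key := revPathWeight_ofFn_add_eq_sum_prevIdx w (a :: (t ++ [b])).get
  rw [List.ofFn_get, hlast] at key
  exact key.trans_le (hw _ (by simp) _ (List.nodup_iff_injective_get.mp ht))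

variable (w) [Fintype ι]

instance finite_nodup_cons (k : ι) : Finite {t : List ι // (k :: t).Nodup} :=
  Set.Finite.to_subtype <| (List.finite_length_le ι (Fintype.card ι)).subset fun _ ht =>
    (List.nodup_cons.mp ht).2.length_le_card

/-- The weight of a longest simple path ending at `k`. -/
noncomputable def pathPotential (k : ι) : ℝ :=
  ⨆ t : {t : List ι // (k :: t).Nodup}, revPathWeight w (k :: t)

variable {w}

lemma le_pathPotential {k : ι} {t : List ι} (ht : (k :: t).Nodup) :
    revPathWeight w (k :: t) ≤ pathPotential w k :=
  le_ciSup (f := fun t : {t : List ι // (k :: t).Nodup} => revPathWeight w (k :: t))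
    (Set.finite_range _).bddAbove ⟨t, ht⟩

lemma exists_pathPotential_eq (k : ι) :
    ∃ t, (k :: t).Nodup ∧ pathPotential w k = revPathWeight w (k :: t) := by
  have : Nonempty {t : List ι // (k :: t).Nodup} := ⟨⟨[], List.nodup_singleton k⟩⟩
  obtain ⟨⟨t, ht⟩, heq⟩ :=
    exists_eq_ciSup_of_finite (f := fun t : {t : List ι // (k :: t).Nodup} =>
      revPathWeight w (k :: t))
  exact ⟨t, ht, heq.symm⟩

lemma pathPotential_nonneg (k : ι) : 0 ≤ pathPotential w k :=
  le_pathPotential (t := []) (List.nodup_singleton k)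

lemma pathPotential_add_le (hw : NoPositiveCycle w) {j k : ι} (hjk : j ≠ k) :
    pathPotential w j + w j k ≤ pathPotential w k := by
  obtain ⟨t, ht, heq⟩ := exists_pathPotential_eq (w := w) j
  rw [heq]
  by_cases hk : k ∈ t
  · -- the longest path into `j` passes through `k`: split it there and close the cycle
    -- `k → ⋯ → j → k`
    obtain ⟨u, v, rfl⟩ := List.append_of_mem hk
    rw [← List.cons_append] at ht ⊢
    rw [revPathWeight_append_cons]
    have hcycle : revPathWeight w (j :: u ++ [k]) + w j k ≤ 0 :=
      hw.revPathWeight_add_le (ht.sublist (by simp))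
    have hv := le_pathPotential (w := w) (ht.sublist (List.sublist_append_right (j :: u) (k :: v)))
    linarith
  · have hkt : (k :: j :: t).Nodup := List.nodup_cons.mpr ⟨by simp [hk, Ne.symm hjk], ht⟩
    have := le_pathPotential (w := w) hkt
    rw [revPathWeight_cons_cons] at this
    linarith

lemma pathPotential_le (hw : NoPositiveCycle w) {B : ι → ℝ} (hB : ∀ k, 0 ≤ B k)
    (hclose : ∀ j k, j ≠ k → -B k ≤ w k j) (k : ι) : pathPotential w k ≤ B k := by
  obtain ⟨t, ht, heq⟩ := exists_pathPotential_eq (w := w) k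
  rw [heq]
  rcases t.eq_nil_or_concat' with rfl | ⟨t, b, rfl⟩
  · simpa using hB k
  · have hbk : k ≠ b := fun h => (List.nodup_cons.mp ht).1 (by simp [h])
    have := hw.revPathWeight_add_le ht
    linarith [hclose b k hbk.symm]

end Potential

lemma sum_Iic_le_sub_of_le_sub {n : ℕ} {a x M : Fin n → ℝ} {t : ℝ} (ha : ∀ l, a l ≤ x l - M l)
    (hx : ∀ l' l, l' < l → x l' ≤ M l) (ht : ∀ l, t ≤ M l) (l : Fin n) :
    ∑ s ∈ Iic l, a s ≤ x l - t := by
  induction l using WellFoundedLT.induction with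
  | _ l ih =>
    rw [← Iio_insert, sum_insert notMem_Iio_self]
    rcases (Iio l).eq_empty_or_nonempty with h | h
    · rw [h, sum_empty]
      linarith [ha l, ht l]
    · set l' := (Iio l).max' h
      have hl' : l' < l := mem_Iio.mp (max'_mem _ h)
      have hIio : Iio l = Iic l' := by
        ext s
        simp only [mem_Iio, mem_Iic]
        exact ⟨fun hs => le_max' _ _ (mem_Iio.mpr hs), fun hs => hs.trans_lt hl'⟩
      rw [hIio]
      linarith [ha l, ih l' hl', hx l' l hl']

section InnerMax

variable {K : ℕ} {L : Fin K → ℕ} {α : (k : Fin K) → Fin (L k) → Fin K → ℝ}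
  {π : (k : Fin K) → Equiv.Perm (Fin (L k))} {S : Set (User L)} {r : (k : Fin K) → Fin (L k) → ℝ}
  {k : Fin K} {l : Fin (L k)}

lemma bddAbove_innerMax_set :
    BddAbove (insert (0 : ℝ)
      ({x : ℝ | ∃ l' : Fin (L k), l' < l ∧ (⟨k, π k l'⟩ : User L) ∈ S ∧
          x = r k (π k l') + α k (π k l') k} ∪
       {x : ℝ | ∃ (j : Fin K) (lj : Fin (L j)), j ≠ k ∧ (⟨j, lj⟩ : User L) ∈ S ∧
          x = r j lj + α j lj k})) := by
  refine (Set.Finite.insert _ (Set.Finite.union ?_ ?_)).bddAbove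
  · refine (Set.finite_range fun l' => r k (π k l') + α k (π k l') k).subset ?_
    rintro _ ⟨l', -, -, rfl⟩
    exact ⟨l', rfl⟩
  · refine (Set.finite_range fun u : User L => r u.1 u.2 + α u.1 u.2 k).subset ?_
    rintro _ ⟨j, lj, -, -, rfl⟩
    exact ⟨⟨j, lj⟩, rfl⟩

lemma innerMax_nonneg : 0 ≤ innerMax L α π S r k l :=
  le_csSup bddAbove_innerMax_set (Set.mem_insert _ _)

lemma le_innerMax_of_lt {l' : Fin (L k)} (h : l' < l) (hS : (⟨k, π k l'⟩ : User L) ∈ S) :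
    r k (π k l') + α k (π k l') k ≤ innerMax L α π S r k l :=
  le_csSup bddAbove_innerMax_set (Set.mem_insert_of_mem _ (Or.inl ⟨l', h, hS, rfl⟩))

lemma le_innerMax_of_ne {j : Fin K} {lj : Fin (L j)} (h : j ≠ k) (hS : (⟨j, lj⟩ : User L) ∈ S) :
    r j lj + α j lj k ≤ innerMax L α π S r k l :=
  le_csSup bddAbove_innerMax_set (Set.mem_insert_of_mem _ (Or.inr ⟨j, lj, h, hS, rfl⟩))

lemma innerMax_le {T : ℝ} (h0 : 0 ≤ T)
    (hcell : ∀ l' : Fin (L k), l' < l → r k (π k l') + α k (π k l') k ≤ T)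
    (hcross : ∀ (j : Fin K) (lj : Fin (L j)), j ≠ k → r j lj + α j lj k ≤ T) :
    innerMax L α π S r k l ≤ T := by
  refine csSup_le (Set.insert_nonempty _ _) ?_
  rintro _ (rfl | ⟨l', h, -, rfl⟩ | ⟨j, lj, h, -, rfl⟩)
  exacts [h0, hcell l' h, hcross j lj h]

end InnerMax

section Region

variable {K : ℕ} {L : Fin K → ℕ} {α : (k : Fin K) → Fin (L k) → Fin K → ℝ}
  {π : (k : Fin K) → Equiv.Perm (Fin (L k))} {d : (k : Fin K) → Fin (L k) → ℝ}

variable (π d) in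
def prefixRate (k : Fin K) (l : Fin (L k)) : ℝ :=
  ∑ s ∈ Iic l, d k (π k s)

lemma prefixRate_le_sub {r : (k : Fin K) → Fin (L k) → ℝ} {k : Fin K}
    (hr : ∀ l, d k (π k l) ≤ r k (π k l) + α k (π k l) k - innerMax L α π Set.univ r k l)
    {t : ℝ} (ht : ∀ l, t ≤ innerMax L α π Set.univ r k l) (l : Fin (L k)) :
    prefixRate π d k l ≤ r k (π k l) + α k (π k l) k - t :=
  sum_Iic_le_sub_of_le_sub hr (fun _ _ h => le_innerMax_of_lt h trivial) ht l

lemma cyclicSystem_of_polyTIN (hd : polyTIN L α π Set.univ d) : cyclicSystem L α π d := by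
  obtain ⟨-, -, r, hr0, hr⟩ := hd
  have hbound (k : Fin K) {t : ℝ} (ht : ∀ l, t ≤ innerMax L α π Set.univ r k l) (l : Fin (L k)) :=
    prefixRate_le_sub (fun l => hr k l trivial) ht l
  refine ⟨fun k l => ?_, fun m hm _ c hc lsel => ?_⟩
  · change prefixRate π d k l ≤ _
    linarith [hbound k (fun _ => innerMax_nonneg) l, hr0 k (π k l) trivial]
  · set f := fun j => prefixRate π d (c j) (lsel j)
    set g := fun j => r (c j) (π (c j) (lsel j)) + α (c j) (π (c j) (lsel j)) (c j)
    set i := fun j => α (c j) (π (c j) (lsel j)) (c (prevIdx j))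
    -- bound cell `c (j - 1)` by the interference it receives from cell `c j`
    have hstep (j : Fin m) : f (prevIdx j) ≤ g (prevIdx j) - (r (c j) (π (c j) (lsel j)) + i j) :=
      hbound _ (fun _ => le_innerMax_of_ne (hc.ne (prevIdx_ne hm j).symm) trivial) _
    have hb := prevIdx_bijective m
    have hsum := sum_le_sum fun j (_ : j ∈ univ) => hstep j
    rw [hb.sum_comp f, sum_sub_distrib, hb.sum_comp g] at hsum
    simp only [g, sum_add_distrib, sum_sub_distrib] at hsum ⊢
    exact hsum.trans_eq (by ring)

variable (α π d)

noncomputable def excessWeight (j k : Fin K) : ℝ :=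
  ⨆ l : Fin (L j), prefixRate π d j l - α j (π j l) j + α j (π j l) k

noncomputable def slack (k : Fin K) : ℝ :=
  ⨅ l : Fin (L k), α k (π k l) k - prefixRate π d k l

variable {α π d}

lemma le_excessWeight (j k : Fin K) (l : Fin (L j)) :
    prefixRate π d j l - α j (π j l) j + α j (π j l) k ≤ excessWeight α π d j k :=
  le_ciSup (f := fun l => prefixRate π d j l - α j (π j l) j + α j (π j l) k)
    (Set.finite_range _).bddAbove l

lemma slack_le (k : Fin K) (l : Fin (L k)) :
    slack α π d k ≤ α k (π k l) k - prefixRate π d k l :=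
  ciInf_le (f := fun l => α k (π k l) k - prefixRate π d k l) (Set.finite_range _).bddBelow l

lemma noPositiveCycle_excessWeight (hL : ∀ k, 1 ≤ L k) (hcs : cyclicSystem L α π d) :
    NoPositiveCycle (excessWeight α π d) := by
  intro m hm c hc
  have hne (k : Fin K) : Nonempty (Fin (L k)) := ⟨⟨0, hL k⟩⟩
  choose lsel hlsel using fun j => have := hne (c j)
    exists_eq_ciSup_of_finite (f := fun l : Fin (L (c j)) =>
      prefixRate π d (c j) l - α (c j) (π (c j) l) (c j) + α (c j) (π (c j) l) (c (prevIdx j)))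
  have key := hcs.2 m hm (by simpa using Fintype.card_le_of_injective c hc) c hc lsel
  have hW (j : Fin m) : excessWeight α π d (c j) (c (prevIdx j)) = _ := (hlsel j).symm
  simp only [hW, prefixRate, sum_add_distrib, sum_sub_distrib] at key ⊢
  linarith

lemma slack_nonneg (hL : ∀ k, 1 ≤ L k) (hcs : cyclicSystem L α π d) (k : Fin K) :
    0 ≤ slack α π d k :=
  have : Nonempty (Fin (L k)) := ⟨⟨0, hL k⟩⟩
  le_ciInf fun l => sub_nonneg.mpr (hcs.1 k l)

lemma neg_slack_le_excessWeight (hL : ∀ k, 1 ≤ L k)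
    (hα : ∀ (k : Fin K) (l : Fin (L k)) (i : Fin K), 0 ≤ α k l i) (k j : Fin K) :
    -slack α π d k ≤ excessWeight α π d k j := by
  have : Nonempty (Fin (L k)) := ⟨⟨0, hL k⟩⟩
  obtain ⟨l, hl⟩ := exists_eq_ciInf_of_finite (f := fun l : Fin (L k) =>
    α k (π k l) k - prefixRate π d k l)
  rw [slack, ← hl]
  linarith [le_excessWeight (α := α) (π := π) (d := d) k j l, hα k (π k l) j]

lemma polyTIN_univ_of_potential (hd0 : ∀ k l, 0 ≤ d k l) {C : Fin K → ℝ} (hC0 : ∀ k, 0 ≤ C k)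
    (hCle : ∀ k l, C k + prefixRate π d k l ≤ α k (π k l) k)
    (hCW : ∀ j k, j ≠ k → C j + excessWeight α π d j k ≤ C k) :
    polyTIN L α π Set.univ d := by
  set r : (k : Fin K) → Fin (L k) → ℝ :=
    fun k lj => C k + prefixRate π d k ((π k).symm lj) - α k lj k with hr
  have hrπ (k : Fin K) (l : Fin (L k)) :
      r k (π k l) + α k (π k l) k = C k + prefixRate π d k l := by
    simp [hr]
  refine ⟨hd0, fun _ _ h => absurd trivial h, r, fun k lj _ => ?_, fun k l _ => ?_⟩
  · obtain ⟨l, rfl⟩ := (π k).surjective lj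
    linarith [hrπ k l, hCle k l]
  · set below := ∑ s ∈ Iio l, d k (π k s)
    have hsplit : prefixRate π d k l = d k (π k l) + below := by
      rw [prefixRate, ← Iio_insert, sum_insert notMem_Iio_self]
    have hbelow : 0 ≤ below := sum_nonneg fun s _ => hd0 k (π k s)
    have hmax : innerMax L α π Set.univ r k l ≤ C k + below := by
      refine innerMax_le (by linarith [hC0 k]) (fun l' hl' => ?_) (fun j lj hjk => ?_)
      · have : prefixRate π d k l' ≤ below :=
          sum_le_sum_of_subset_of_nonneg (fun s hs => mem_Iio.mpr ((mem_Iic.mp hs).trans_lt hl'))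
            fun s _ _ => hd0 k (π k s)
        linarith [hrπ k l']
      · obtain ⟨l'', rfl⟩ := (π j).surjective lj
        linarith [hrπ j l'', le_excessWeight (α := α) (π := π) (d := d) j k l'', hCW j k hjk]
    linarith [hrπ k l]

lemma polyTIN_of_cyclicSystem (hL : ∀ k, 1 ≤ L k)
    (hα : ∀ (k : Fin K) (l : Fin (L k)) (i : Fin K), 0 ≤ α k l i)
    (hd0 : ∀ k l, 0 ≤ d k l) (hcs : cyclicSystem L α π d) :
    polyTIN L α π Set.univ d := by
  have hW := noPositiveCycle_excessWeight hL hcs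
  have hslack := pathPotential_le hW (slack_nonneg hL hcs) fun j k _ =>
    neg_slack_le_excessWeight hL hα k j
  refine polyTIN_univ_of_potential hd0 pathPotential_nonneg (fun k l => ?_)
    fun j k hjk => pathPotential_add_le hW hjk
  linarith [hslack k, slack_le (α := α) (π := π) (d := d) k l]

end Region

theorem polyTIN_iff_cyclicSystem_general {K : ℕ}
    (L : Fin K → ℕ) (hL : ∀ k, 1 ≤ L k)
    (α : (k : Fin K) → Fin (L k) → Fin K → ℝ)
    (hα : ∀ (k : Fin K) (l : Fin (L k)) (i : Fin K), 0 ≤ α k l i)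
    (π : (k : Fin K) → Equiv.Perm (Fin (L k)))
    (d : (k : Fin K) → Fin (L k) → ℝ) :
    polyTIN L α π Set.univ d ↔
      ((∀ (k : Fin K) (l : Fin (L k)), 0 ≤ d k l) ∧ cyclicSystem L α π d) :=
  ⟨fun hd => ⟨hd.1, cyclicSystem_of_polyTIN hd⟩,
    fun ⟨hd0, hcs⟩ => polyTIN_of_cyclicSystem hL hα hd0 hcs⟩

/-- **Theorem 1 (polyhedral TIN region characterization).**
For every decoding order `π`, a nonnegative GDoF tuple `d` admits a power allocation
`r ≤ 0` realizing it in the polyhedral TIN sense (i.e. `d ∈ P_π(𝒦)`) if and only if `d`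
satisfies the TIN cyclic system of inequalities for `π`. -/
theorem polyTIN_iff_cyclicSystem {K : ℕ} (hK : 1 ≤ K)
    (L : Fin K → ℕ) (hL : ∀ k, 1 ≤ L k)
    (α : (k : Fin K) → Fin (L k) → Fin K → ℝ)
    (hα : ∀ (k : Fin K) (l : Fin (L k)) (i : Fin K), 0 ≤ α k l i)
    (hmono : ∀ k : Fin K, Monotone (fun l : Fin (L k) => α k l k))
    (π : (k : Fin K) → Equiv.Perm (Fin (L k)))
    (d : (k : Fin K) → Fin (L k) → ℝ) :
    polyTIN L α π Set.univ d ↔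
      ((∀ (k : Fin K) (l : Fin (L k)), 0 ≤ d k l) ∧ cyclicSystem L α π d) :=
  polyTIN_iff_cyclicSystem_general L hL α hα π d
end

section
/- A tuple d ∈ ℝ_{≥0}^𝒦 belongs to the polyhedral TIN region P_id(𝒦) if and only if every directed circuit of the potential graph (with edge lengths determined by d and the channel strength levels) has nonnegative total length. -/
open Finset

/-- Edge lengths of the potential graph. Vertices are `Option (User L)`, with `none` the
ground node `v₀`. (The values on edges never traversed by a circuit of distinct vertices,
namely loops and `none → none`, are irrelevant.) -/
noncomputable def edgeLen {K : ℕ} (L : Fin K → ℕ)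
    (α : (k : Fin K) → Fin (L k) → Fin K → ℝ)
    (d : (k : Fin K) → Fin (L k) → ℝ) :
    Option (User L) → Option (User L) → ℝ
  | none, _ => 0
  | some u, none => α u.1 u.2 u.1 - d u.1 u.2
  | some u, some v =>
      if u.1 = v.1 then
        (if (u.2 : ℕ) < (v.2 : ℕ) then α u.1 u.2 u.1 - d u.1 u.2
         else α u.1 u.2 u.1 - α v.1 v.2 v.1 - d u.1 u.2)
      else α u.1 u.2 u.1 - α v.1 v.2 u.1 - d u.1 u.2

/-!
A power allocation `r` witnesses `d ∈ P_id(𝒦)` exactly when the potential that is `0` at `v₀`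
and `r_k^{[l]}` at `(l,k)` is feasible for the potential graph: the edges leaving `v₀` say
`r ≤ 0`, and the edges leaving `(l,k)` say that `r_k^{[l]} + α_{kk}^{[l]} - d_k^{[l]}` bounds
every term of the maximum. Feasible potentials are invariant under translation, so it remains
to apply the potential theorem: a feasible potential exists iff no circuit is negative. One
direction telescopes along the circuit; for the other, minus the length of a shortest simple
path leaving a vertex is a feasible potential.
-/

section Potential

variable {β : Type*} (e : β → β → ℝ)

def pathLength : List β → ℝ
  | a :: b :: t => e a b + pathLength (b :: t)
  | _ => 0

@[simp]
theorem pathLength_cons_cons (a b : β) (t : List β) :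
    pathLength e (a :: b :: t) = e a b + pathLength e (b :: t) := rfl

theorem pathLength_append_cons (l₁ : List β) (b : β) (l₂ : List β) :
    pathLength e (l₁ ++ b :: l₂) = pathLength e (l₁ ++ [b]) + pathLength e (b :: l₂) := by
  induction l₁ with
  | nil => simp [pathLength]
  | cons a t ih =>
    cases t with
    | nil => simp [pathLength]
    | cons c t => simp only [List.cons_append, pathLength_cons_cons] at ih ⊢; rw [ih]; ring

theorem sum_getElem_append_eq_pathLength (a x : β) (s : List β) :
    ∑ j : Fin (a :: s).length, e (a :: s)[j] (s ++ [x])[j] = pathLength e (a :: s ++ [x]) := by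
  induction s generalizing a with
  | nil => simp [pathLength]
  | cons b s ih =>
    exact (Fin.sum_univ_succ _).trans (congrArg (e a b + ·) (ih b))

theorem nextIdx_eq_add_one {m : ℕ} [NeZero m] (j : Fin m) : nextIdx j = j + 1 := by
  ext
  simp [nextIdx, Fin.val_add]

theorem nextIdx_ne_self {m : ℕ} (hm : 2 ≤ m) (j : Fin m) : nextIdx j ≠ j := by
  intro h
  have hj := congrArg Fin.val h
  simp only [nextIdx] at hj
  rcases Nat.lt_or_ge (j + 1) m with hlt | hge
  · rw [Nat.mod_eq_of_lt hlt] at hj; omega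
  · rw [show (j : ℕ) + 1 = m by omega, Nat.mod_self] at hj; omega

theorem get_nextIdx_eq_getElem_rotate (l : List β) (j : Fin l.length) :
    l.get (nextIdx j) = (l.rotate 1)[j]'(by simp) := by
  simp [nextIdx]

theorem sum_nextIdx_eq_pathLength (a : β) (s : List β) :
    ∑ j, e ((a :: s).get j) ((a :: s).get (nextIdx j)) = pathLength e (a :: s ++ [a]) := by
  simp only [get_nextIdx_eq_getElem_rotate, List.rotate_cons_succ, List.rotate_zero]
  exact sum_getElem_append_eq_pathLength e a a s

/-- Loops are excluded, as `edgeLen` assigns them meaningless values. -/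
def IsPotential (p : β → ℝ) : Prop :=
  ∀ u w, u ≠ w → p w ≤ p u + e u w

variable {e}

theorem IsPotential.add_const {p : β → ℝ} (hp : IsPotential e p) (c : ℝ) :
    IsPotential e (fun u => p u + c) :=
  fun u w huw => by linarith [hp u w huw]

theorem IsPotential.circuit_nonneg {p : β → ℝ} (hp : IsPotential e p) {n : ℕ} (hn : 2 ≤ n)
    (v : Fin n → β) (hv : Function.Injective v) :
    0 ≤ ∑ j, e (v j) (v (nextIdx j)) := by
  have : NeZero n := ⟨by omega⟩
  have htel : ∑ j, p (v (nextIdx j)) = ∑ j, p (v j) := by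
    simp only [nextIdx_eq_add_one]
    exact Equiv.sum_comp (Equiv.addRight 1) (p ∘ v)
  have hstep : ∀ j, p (v (nextIdx j)) - p (v j) ≤ e (v j) (v (nextIdx j)) := fun j => by
    linarith [hp _ _ (hv.ne (nextIdx_ne_self hn j).symm)]
  calc (0 : ℝ) = ∑ j, (p (v (nextIdx j)) - p (v j)) := by
        rw [Finset.sum_sub_distrib, htel, sub_self]
    _ ≤ _ := Finset.sum_le_sum fun j _ => hstep j

theorem finite_setOf_nodup [Finite β] : {l : List β | l.Nodup}.Finite := by
  have := Fintype.ofFinite β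
  exact (List.finite_length_le β (Fintype.card β)).subset fun _ hl => hl.length_le_card

theorem exists_isPotential_of_pathLength_nonneg [Finite β]
    (h : ∀ a s, (a :: s).Nodup → s ≠ [] → 0 ≤ pathLength e (a :: s ++ [a])) :
    ∃ p, IsPotential e p := by
  have hmin : ∀ u, ∃ c ∈ {c : List β | (u :: c).Nodup},
      ∀ c' ∈ {c : List β | (u :: c).Nodup}, pathLength e (u :: c) ≤ pathLength e (u :: c') :=
    fun u => Set.exists_min_image _ _ (finite_setOf_nodup.subset fun _ hc => hc.of_cons)
      ⟨[], List.nodup_singleton u⟩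
  choose c hc hmin using hmin
  refine ⟨fun u => -pathLength e (u :: c u), fun u w huw => ?_⟩
  by_cases hu : u ∈ c w
  · obtain ⟨c₁, c₂, hsplit⟩ := List.append_of_mem hu
    have hnd : (w :: (c₁ ++ u :: c₂)).Nodup := hsplit ▸ hc w
    have hcirc : (u :: w :: c₁).Nodup := by
      rw [← List.cons_append, List.nodup_middle] at hnd
      exact hnd.sublist ((List.prefix_append _ _).sublist.cons_cons u)
    have hu₂ : (u :: c₂).Nodup := hnd.sublist ((List.suffix_append _ _).sublist.cons w)
    -- `c₂` is a simple path leaving `u`, and `u → w → c₁ → u` is a circuit.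
    have := hmin u c₂ hu₂
    have := h u (w :: c₁) hcirc (List.cons_ne_nil _ _)
    have := pathLength_append_cons e (w :: c₁) u c₂
    simp only [List.cons_append, pathLength_cons_cons] at *
    rw [hsplit]
    linarith
  · have := hmin u (w :: c w) (List.nodup_cons.2 ⟨by simp [huw, hu], hc w⟩)
    simp only [pathLength_cons_cons] at this
    linarith

theorem exists_isPotential_iff_circuits_nonneg [Finite β] :
    (∃ p, IsPotential e p) ↔
      ∀ n : ℕ, 2 ≤ n → ∀ v : Fin n → β, Function.Injective v →
        0 ≤ ∑ j, e (v j) (v (nextIdx j)) := by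
  refine ⟨fun ⟨p, hp⟩ _ hn v hv => hp.circuit_nonneg hn v hv, fun h => ?_⟩
  refine exists_isPotential_of_pathLength_nonneg fun a s hnd hs => ?_
  rw [← sum_nextIdx_eq_pathLength]
  refine h _ ?_ _ (List.nodup_iff_injective_get.1 hnd)
  cases s <;> simp_all

end Potential

section TIN

variable {K : ℕ} {L : Fin K → ℕ} {α : (k : Fin K) → Fin (L k) → Fin K → ℝ}
  {d : (k : Fin K) → Fin (L k) → ℝ}

theorem innerMax_le_iff {π : (k : Fin K) → Equiv.Perm (Fin (L k))} {S : Set (User L)}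
    {r : (k : Fin K) → Fin (L k) → ℝ} {k : Fin K} {l : Fin (L k)} {B : ℝ} :
    innerMax L α π S r k l ≤ B ↔
      0 ≤ B ∧
      (∀ l' < l, (⟨k, π k l'⟩ : User L) ∈ S → r k (π k l') + α k (π k l') k ≤ B) ∧
      ∀ j (lj : Fin (L j)), j ≠ k → (⟨j, lj⟩ : User L) ∈ S → r j lj + α j lj k ≤ B := by
  have hbdd₁ := (Set.finite_range fun l' => r k (π k l') + α k (π k l') k).bddAbove
  have hbdd₂ := (Set.finite_range fun u : User L => r u.1 u.2 + α u.1 u.2 k).bddAbove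
  rw [innerMax, csSup_le_iff (((hbdd₁.mono ?_).union (hbdd₂.mono ?_)).insert 0)
    (Set.insert_nonempty _ _)]
  · simp only [Set.mem_insert_iff, Set.mem_union, Set.mem_ofPred_eq, or_imp, forall_and,
      forall_eq, forall_exists_index, and_imp]
    refine and_congr_right' (and_congr ⟨fun h l' hl' hS => h _ l' hl' hS rfl, ?_⟩
      ⟨fun h j lj hj hS => h _ j lj hj hS rfl, ?_⟩)
    · rintro h _ l' hl' hS rfl
      exact h l' hl' hS
    · rintro h _ j lj hj hS rfl
      exact h j lj hj hS
  · rintro _ ⟨l', -, -, rfl⟩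
    exact ⟨l', rfl⟩
  · rintro _ ⟨j, lj, -, -, rfl⟩
    exact ⟨⟨j, lj⟩, rfl⟩

@[simp]
theorem edgeLen_none (v : Option (User L)) : edgeLen L α d none v = 0 := rfl

@[simp]
theorem edgeLen_some_none (u : User L) :
    edgeLen L α d (some u) none = α u.1 u.2 u.1 - d u.1 u.2 := rfl

theorem edgeLen_some_some_of_lt {k : Fin K} {l l' : Fin (L k)} (h : l < l') :
    edgeLen L α d (some ⟨k, l⟩) (some ⟨k, l'⟩) = α k l k - d k l := by
  simp [edgeLen, Fin.lt_def.1 h]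

theorem edgeLen_some_some_of_gt {k : Fin K} {l l' : Fin (L k)} (h : l' < l) :
    edgeLen L α d (some ⟨k, l⟩) (some ⟨k, l'⟩) = α k l k - α k l' k - d k l := by
  simp [edgeLen, Fin.lt_def.1 h |>.not_gt]

theorem edgeLen_some_some_of_ne {k j : Fin K} (l : Fin (L k)) (lj : Fin (L j)) (h : k ≠ j) :
    edgeLen L α d (some ⟨k, l⟩) (some ⟨j, lj⟩) = α k l k - α j lj k - d k l := by
  simp [edgeLen, h]

def groundedPotential (r : (k : Fin K) → Fin (L k) → ℝ) : Option (User L) → ℝ :=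
  fun v => v.elim 0 fun u => r u.1 u.2

theorem isPotential_groundedPotential_iff {r : (k : Fin K) → Fin (L k) → ℝ} :
    IsPotential (edgeLen L α d) (groundedPotential r) ↔
      (∀ k l, r k l ≤ 0) ∧
      ∀ k l, innerMax L α (idOrder L) Set.univ r k l ≤ r k l + α k l k - d k l := by
  simp only [innerMax_le_iff, idOrder, Equiv.refl_apply, Set.mem_univ, forall_const]
  constructor
  · intro hp
    refine ⟨fun k l => ?_, fun k l => ⟨?_, fun l' hl' => ?_, fun j lj hj => ?_⟩⟩
    · simpa [groundedPotential, edgeLen_none] using hp none (some ⟨k, l⟩) (by simp)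
    · have := hp (some ⟨k, l⟩) none (by simp)
      simp only [groundedPotential, Option.elim, edgeLen_some_none] at this
      linarith
    · have := hp (some ⟨k, l⟩) (some ⟨k, l'⟩) (by simp [hl'.ne'])
      simp only [groundedPotential, Option.elim, edgeLen_some_some_of_gt hl'] at this
      linarith
    · have := hp (some ⟨k, l⟩) (some ⟨j, lj⟩) (by simp [hj.symm])
      simp only [groundedPotential, Option.elim, edgeLen_some_some_of_ne l lj hj.symm] at this
      linarith
  · rintro ⟨hr, hmax⟩ (_ | ⟨k, l⟩) (_ | ⟨j, lj⟩) huw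
    · exact absurd rfl huw
    · simpa [groundedPotential, edgeLen_none] using hr j lj
    · simp only [groundedPotential, Option.elim, edgeLen_some_none]
      linarith [(hmax k l).1]
    · simp only [groundedPotential, Option.elim]
      rcases eq_or_ne k j with rfl | hkj
      · rcases lt_trichotomy l lj with hlt | rfl | hgt
        · rw [edgeLen_some_some_of_lt hlt]
          linarith [hr k lj, (hmax k l).1]
        · exact absurd rfl huw
        · rw [edgeLen_some_some_of_gt hgt]
          linarith [(hmax k l).2.1 lj hgt]
      · rw [edgeLen_some_some_of_ne l lj hkj]
        linarith [(hmax k l).2.2 j lj hkj.symm]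

theorem exists_isPotential_edgeLen_iff :
    (∃ p, IsPotential (edgeLen L α d) p) ↔
      ∃ r, IsPotential (edgeLen L α d) (groundedPotential r) := by
  refine ⟨fun ⟨p, hp⟩ => ⟨fun k l => p (some ⟨k, l⟩) - p none, ?_⟩, fun ⟨_, hr⟩ => ⟨_, hr⟩⟩
  convert hp.add_const (-p none) using 1
  funext v
  cases v <;> simp [groundedPotential, sub_eq_add_neg]

theorem polyTIN_idOrder_univ_iff :
    polyTIN L α (idOrder L) Set.univ d ↔
      (∀ k l, 0 ≤ d k l) ∧ ∃ p, IsPotential (edgeLen L α d) p := by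
  simp only [polyTIN, exists_isPotential_edgeLen_iff, isPotential_groundedPotential_iff,
    Set.mem_univ, not_true_eq_false, false_imp_iff, implies_true, true_and, forall_const,
    idOrder, Equiv.refl_apply, le_sub_comm]

end TIN

theorem polyTIN_iff_circuits_nonneg_general {K : ℕ}
    (L : Fin K → ℕ)
    (α : (k : Fin K) → Fin (L k) → Fin K → ℝ)
    (d : (k : Fin K) → Fin (L k) → ℝ)
    (hd : ∀ (k : Fin K) (l : Fin (L k)), 0 ≤ d k l) :
    polyTIN L α (idOrder L) Set.univ d ↔
      (∀ n : ℕ, 2 ≤ n → ∀ v : Fin n → Option (User L), Function.Injective v →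
        0 ≤ ∑ j, edgeLen L α d (v j) (v (nextIdx j))) := by
  rw [polyTIN_idOrder_univ_iff, exists_isPotential_iff_circuits_nonneg]
  exact and_iff_right hd

/-- **Lemma 1 (potential graph characterization).**
A nonnegative tuple `d` lies in the polyhedral TIN region `P_id(𝒦)` if and only if every
directed circuit of the potential graph, i.e. every cyclic sequence of `n ≥ 2` distinct
vertices, has nonnegative total length. -/
theorem polyTIN_iff_circuits_nonneg {K : ℕ} (hK : 1 ≤ K)
    (L : Fin K → ℕ) (hL : ∀ k, 1 ≤ L k)
    (α : (k : Fin K) → Fin (L k) → Fin K → ℝ)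
    (hα : ∀ (k : Fin K) (l : Fin (L k)) (i : Fin K), 0 ≤ α k l i)
    (hmono : ∀ k : Fin K, Monotone (fun l : Fin (L k) => α k l k))
    (d : (k : Fin K) → Fin (L k) → ℝ)
    (hd : ∀ (k : Fin K) (l : Fin (L k)), 0 ≤ d k l) :
    polyTIN L α (idOrder L) Set.univ d ↔
      (∀ n : ℕ, 2 ≤ n → ∀ v : Fin n → Option (User L), Function.Injective v →
        0 ≤ ∑ j, edgeLen L α d (v j) (v (nextIdx j))) :=
  polyTIN_iff_circuits_nonneg_general L α d hd
end

section
/- Assume the TIN-convexity condition (C1). Let π be a decoding order, M ⊆ {1,…,K} nonempty, and l'_i ∈ {1,…,L_i} for each i ∈ M. For each i ∈ M let l_i be the smallest element of {1,…,L_i} such that {1,…,l'_i} ⊆ {π_i(1),…,π_i(l_i)}. Then f_π(M,(l_i)_{i∈M}) ≤ f_id(M,(l'_i)_{i∈M}). -/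
/-! Since `l_i` is the least index whose first `l_i` decoded users cover `{1,…,l'_i}`, the
last of them, `π_i(l_i)`, lies in `{1,…,l'_i}`, so `π_i(l_i) ≤ l'_i`. Condition (C1) says
that each gap `α_{ii}^{[l]} − α_{ij}^{[l]}` grows with `l`, so every cyclic sum, and hence
their minimum, only grows when `π_i(l_i)` is replaced by `l'_i`; in the singleton case one
uses the monotonicity of `α_{ii}` instead. -/

open Finset

/-- The cyclic sum `Σ_j (α_{i_j i_j}^{[π(l_{i_j})]} − α_{i_j i_{j−1}}^{[π(l_{i_j})]})`
associated with a cyclic arrangement `c` of cells. -/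
noncomputable def cycVal {K : ℕ} (L : Fin K → ℕ)
    (α : (k : Fin K) → Fin (L k) → Fin K → ℝ)
    (π : (k : Fin K) → Equiv.Perm (Fin (L k)))
    {m : ℕ} (c : Fin m → Fin K) (lsel : (i : Fin K) → Fin (L i)) : ℝ :=
  ∑ j, (α (c j) (π (c j) (lsel (c j))) (c j) -
        α (c j) (π (c j) (lsel (c j))) (c (prevIdx j)))

/-- The set function `f_π(M, (l_i)_{i∈M})`: for a singleton `M = {i}` it is
`α_{ii}^{[π_i(l_i)]}`; for `|M| ≥ 2` it is the minimum of the cyclic sums over all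
cyclic arrangements of `M`. -/
noncomputable def fOrder {K : ℕ} (L : Fin K → ℕ)
    (α : (k : Fin K) → Fin (L k) → Fin K → ℝ)
    (π : (k : Fin K) → Equiv.Perm (Fin (L k)))
    (M : Finset (Fin K)) (lsel : (i : Fin K) → Fin (L i)) : ℝ :=
  if M.card = 1 then ∑ i ∈ M, α i (π i (lsel i)) i
  else sInf {x : ℝ | ∃ c : Fin M.card → Fin K,
    Function.Injective c ∧ (∀ j, c j ∈ M) ∧ x = cycVal L α π c lsel}

theorem apply_le_of_isLeast_Iic_subset_image {α β : Type*} [LinearOrder α]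
    [LocallyFiniteOrderBot α] [Preorder β] [LocallyFiniteOrderBot β] [DecidableEq β]
    {f : α → β} {a : β} {b : α} (h : IsLeast {t | Iic a ⊆ (Iic t).image f} b) :
    f b ≤ a := by
  by_contra hab
  have hcover : Iic a ⊆ (Iio b).image f := by
    intro x hx
    obtain ⟨y, hy, rfl⟩ := mem_image.1 (h.1 hx)
    refine mem_image.2 ⟨y, mem_Iio.2 ((mem_Iic.1 hy).lt_of_ne ?_), rfl⟩
    rintro rfl
    exact hab (mem_Iic.1 hx)
  have hne : (Iio b).Nonempty := image_nonempty.1 ((nonempty_Iic (a := a)).mono hcover)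
  have hmax : Iio b ⊆ Iic ((Iio b).max' hne) := fun y hy => mem_Iic.2 (le_max' _ y hy)
  have hb := h.2 (hcover.trans (image_subset_image hmax))
  exact (mem_Iio.1 (max'_mem _ hne)).not_ge hb

theorem sub_le_sub_of_add_sub_le {ι κ : Type*} [PartialOrder ι] {g : ι → κ → ℝ} {i : κ}
    (hg : ∀ j, j ≠ i → ∀ p q, p < q → g p i + g q j - g p j ≤ g q i)
    {p q : ι} (hpq : p ≤ q) (j : κ) :
    g p i - g p j ≤ g q i - g q j := by
  obtain rfl | hji := eq_or_ne j i
  · simp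
  obtain hlt | rfl := hpq.lt_or_eq
  · linarith [hg j hji p q hlt]
  · rfl

theorem csInf_le_csInf_of_forall_le {γ : Type*} [Finite γ] {P : γ → Prop} (hP : ∃ c, P c)
    {F G : γ → ℝ} (h : ∀ c, P c → F c ≤ G c) :
    sInf {x | ∃ c, P c ∧ x = F c} ≤ sInf {x | ∃ c, P c ∧ x = G c} := by
  have hfin : ∀ H : γ → ℝ, {x | ∃ c, P c ∧ x = H c}.Finite := fun H =>
    (Set.finite_range H).subset fun x ⟨c, _, hx⟩ => ⟨c, hx.symm⟩
  obtain ⟨c, hc, hGc⟩ := (hP.elim fun c hc => ⟨G c, c, hc, rfl⟩ :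
    Set.Nonempty {x | ∃ c, P c ∧ x = G c}).csInf_mem (hfin G)
  calc sInf {x | ∃ c, P c ∧ x = F c} ≤ F c := csInf_le (hfin F).bddBelow ⟨c, hc, rfl⟩
    _ ≤ G c := h c hc
    _ = _ := hGc.symm

theorem exists_injective_fin_card_mem {ι : Type*} (s : Finset ι) :
    ∃ c : Fin s.card → ι, Function.Injective c ∧ ∀ j, c j ∈ s :=
  ⟨fun j => s.equivFin.symm j, Subtype.coe_injective.comp s.equivFin.symm.injective,
    fun j => (s.equivFin.symm j).2⟩

section

variable {K : ℕ} {L : Fin K → ℕ} {α : (k : Fin K) → Fin (L k) → Fin K → ℝ}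
  {π π' : (k : Fin K) → Equiv.Perm (Fin (L k))} {M : Finset (Fin K)}
  {l l' : (i : Fin K) → Fin (L i)}

theorem cycVal_le_cycVal {m : ℕ} {c : Fin m → Fin K}
    (h : ∀ j k, α (c j) (π (c j) (l (c j))) (c j) - α (c j) (π (c j) (l (c j))) k ≤
      α (c j) (π' (c j) (l' (c j))) (c j) - α (c j) (π' (c j) (l' (c j))) k) :
    cycVal L α π c l ≤ cycVal L α π' c l' :=
  sum_le_sum fun j _ => h j _

theorem fOrder_le_fOrder
    (hdiag : ∀ i ∈ M, α i (π i (l i)) i ≤ α i (π' i (l' i)) i)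
    (hgap : ∀ i ∈ M, ∀ j, α i (π i (l i)) i - α i (π i (l i)) j ≤
      α i (π' i (l' i)) i - α i (π' i (l' i)) j) :
    fOrder L α π M l ≤ fOrder L α π' M l' := by
  unfold fOrder
  split_ifs
  · exact sum_le_sum hdiag
  · simp only [← and_assoc]
    obtain ⟨c, hc⟩ := exists_injective_fin_card_mem M
    exact csInf_le_csInf_of_forall_le ⟨c, hc⟩ fun c hc =>
      cycVal_le_cycVal fun j => hgap _ (hc.2 j)

end

theorem fOrder_le_fOrder_id_general {K : ℕ}
    (L : Fin K → ℕ)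
    (α : (k : Fin K) → Fin (L k) → Fin K → ℝ)
    (hmono : ∀ k : Fin K, Monotone (fun l : Fin (L k) => α k l k))
    (hC1 : ∀ (i j : Fin K), j ≠ i → ∀ (l' l : Fin (L i)), l' < l →
      α i l' i + α i l j - α i l' j ≤ α i l i)
    (π : (k : Fin K) → Equiv.Perm (Fin (L k)))
    (M : Finset (Fin K))
    (l' l : (i : Fin K) → Fin (L i))
    (hl : ∀ i ∈ M, IsLeast
      {t : Fin (L i) | Finset.Iic (l' i) ⊆ (Finset.Iic t).image (π i)} (l i)) :
    fOrder L α π M l ≤ fOrder L α (idOrder L) M l' := by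
  have hle : ∀ i ∈ M, π i (l i) ≤ l' i := fun i hi =>
    apply_le_of_isLeast_Iic_subset_image (hl i hi)
  exact fOrder_le_fOrder (fun i hi => hmono i (hle i hi))
    fun i hi => sub_le_sub_of_add_sub_le (g := α i) (hC1 i) (hle i hi)

/-- **Lemma 3 (Section 5, Step 1 of the convexity proof).**
Assume (C1). Let `π` be a decoding order, `M` a nonempty set of cells and `l'` a choice
of user indices. If for each `i ∈ M`, `l i` is the smallest index such that the first
`l' i` users `{1,…,l'_i}` are contained among `{π_i(1),…,π_i(l_i)}`, then
`f_π(M,(l_i)) ≤ f_id(M,(l'_i))`. -/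
theorem fOrder_le_fOrder_id {K : ℕ} (hK : 1 ≤ K)
    (L : Fin K → ℕ) (hL : ∀ k, 1 ≤ L k)
    (α : (k : Fin K) → Fin (L k) → Fin K → ℝ)
    (hα : ∀ (k : Fin K) (l : Fin (L k)) (i : Fin K), 0 ≤ α k l i)
    (hmono : ∀ k : Fin K, Monotone (fun l : Fin (L k) => α k l k))
    (hC1 : ∀ (i j : Fin K), j ≠ i → ∀ (l' l : Fin (L i)), l' < l →
      α i l' i + α i l j - α i l' j ≤ α i l i)
    (π : (k : Fin K) → Equiv.Perm (Fin (L k)))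
    (M : Finset (Fin K)) (hM : M.Nonempty)
    (l' l : (i : Fin K) → Fin (L i))
    (hl : ∀ i ∈ M, IsLeast
      {t : Fin (L i) | Finset.Iic (l' i) ⊆ (Finset.Iic t).image (π i)} (l i)) :
    fOrder L α π M l ≤ fOrder L α (idOrder L) M l' :=
  fOrder_le_fOrder_id_general L α hmono hC1 π M l' l hl
end

section
/- Assume the TIN-convexity condition (C1). For every nonempty M ⊆ {1,…,K} and indices l'_i ≤ l_i in {1,…,L_i} for each i ∈ M, f_id(M,(l'_i)_{i∈M}) ≤ f_id(M,(l_i)_{i∈M}); i.e., the set function f_id is monotone in the per-cell user indices. -/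
/-!
(C1) says exactly that each term `α_{ii}^{[l]} − α_{ij}^{[l]}` of a cyclic sum grows with the
user index `l` of cell `i`; the two cells of a term differ because a cyclic arrangement of at
least two cells is injective. Hence every cyclic sum, and so their minimum, grows with the indices.
-/

open Finset

theorem csInf_image_le_csInf_image {ι α : Type*} [ConditionallyCompleteLattice α]
    {s : Set ι} {f g : ι → α} (hf : BddBelow (f '' s)) (hfg : ∀ i ∈ s, f i ≤ g i) :
    sInf (f '' s) ≤ sInf (g '' s) := by
  rw [sInf_image', sInf_image']
  exact ciInf_mono (by rwa [← Set.image_eq_range]) fun i => hfg i i.2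

theorem prevIdx_ne_self {m : ℕ} (hm : m ≠ 1) (j : Fin m) : prevIdx j ≠ j := by
  intro h
  have hmod : j.val + (m - 1) ≡ j.val + 0 [MOD m] := by
    rw [Nat.ModEq, add_zero, Nat.mod_eq_of_lt j.isLt]
    exact congrArg Fin.val h
  have hm1 : (m - 1) % m = 0 := Nat.ModEq.add_left_cancel' _ hmod
  rw [Nat.mod_eq_of_lt (by omega)] at hm1
  omega

section TINConvexity

variable {K : ℕ} {L : Fin K → ℕ} {α : (k : Fin K) → Fin (L k) → Fin K → ℝ}

theorem diag_sub_cross_mono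
    (hC1 : ∀ (i j : Fin K), j ≠ i → ∀ (l' l : Fin (L i)), l' < l →
      α i l' i + α i l j - α i l' j ≤ α i l i)
    {i j : Fin K} (hji : j ≠ i) {l' l : Fin (L i)} (hl : l' ≤ l) :
    α i l' i - α i l' j ≤ α i l i - α i l j := by
  rcases hl.lt_or_eq with hlt | rfl
  · linarith [hC1 i j hji l' l hlt]
  · exact le_rfl

theorem cycVal_idOrder_mono
    (hC1 : ∀ (i j : Fin K), j ≠ i → ∀ (l' l : Fin (L i)), l' < l →
      α i l' i + α i l j - α i l' j ≤ α i l i)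
    {m : ℕ} (hm : m ≠ 1) {c : Fin m → Fin K} (hc : Function.Injective c)
    {l' l : (i : Fin K) → Fin (L i)} (hll : ∀ j, l' (c j) ≤ l (c j)) :
    cycVal L α (idOrder L) c l' ≤ cycVal L α (idOrder L) c l :=
  Finset.sum_le_sum fun j _ =>
    diag_sub_cross_mono hC1 (hc.ne (prevIdx_ne_self hm j)) (hll j)

theorem fOrder_eq_sInf_image {π : (k : Fin K) → Equiv.Perm (Fin (L k))}
    {M : Finset (Fin K)} (hM : M.card ≠ 1) (lsel : (i : Fin K) → Fin (L i)) :
    fOrder L α π M lsel = sInf ((cycVal L α π · lsel) ''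
      {c : Fin M.card → Fin K | Function.Injective c ∧ ∀ j, c j ∈ M}) := by
  rw [fOrder, if_neg hM]
  congr 1
  ext x
  simp only [Set.mem_ofPred_eq, Set.mem_image, and_assoc, eq_comm]

end TINConvexity

theorem fOrder_id_monotone_general {K : ℕ}
    (L : Fin K → ℕ)
    (α : (k : Fin K) → Fin (L k) → Fin K → ℝ)
    (hmono : ∀ k : Fin K, Monotone (fun l : Fin (L k) => α k l k))
    (hC1 : ∀ (i j : Fin K), j ≠ i → ∀ (l' l : Fin (L i)), l' < l →
      α i l' i + α i l j - α i l' j ≤ α i l i)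
    (M : Finset (Fin K))
    (l' l : (i : Fin K) → Fin (L i)) (hll : ∀ i ∈ M, l' i ≤ l i) :
    fOrder L α (idOrder L) M l' ≤ fOrder L α (idOrder L) M l := by
  by_cases hM : M.card = 1
  · simp only [fOrder, if_pos hM]
    exact Finset.sum_le_sum fun i hi => hmono i (hll i hi)
  · rw [fOrder_eq_sInf_image hM, fOrder_eq_sInf_image hM]
    exact csInf_image_le_csInf_image (Set.toFinite _).bddBelow fun c hc =>
      cycVal_idOrder_mono hC1 hM hc.1 fun j => hll _ (hc.2 j)

/-- **Lemma 4 (Section 5, Step 2 of the convexity proof): monotonicity of `f_id`.**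
Assume (C1). For every nonempty set of cells `M` and user indices `l' i ≤ l i` for each
`i ∈ M`, one has `f_id(M,(l'_i)) ≤ f_id(M,(l_i))`. -/
theorem fOrder_id_monotone {K : ℕ} (hK : 1 ≤ K)
    (L : Fin K → ℕ) (hL : ∀ k, 1 ≤ L k)
    (α : (k : Fin K) → Fin (L k) → Fin K → ℝ)
    (hα : ∀ (k : Fin K) (l : Fin (L k)) (i : Fin K), 0 ≤ α k l i)
    (hmono : ∀ k : Fin K, Monotone (fun l : Fin (L k) => α k l k))
    (hC1 : ∀ (i j : Fin K), j ≠ i → ∀ (l' l : Fin (L i)), l' < l →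
      α i l' i + α i l j - α i l' j ≤ α i l i)
    (M : Finset (Fin K)) (hM : M.Nonempty)
    (l' l : (i : Fin K) → Fin (L i)) (hll : ∀ i ∈ M, l' i ≤ l i) :
    fOrder L α (idOrder L) M l' ≤ fOrder L α (idOrder L) M l :=
  fOrder_id_monotone_general L α hmono hC1 M l' l hll
end

section
/- Assume the TIN-optimality condition (O1). Fix cells i ≠ j and l_i ∈ {1,…,L_i}, and partition {1,…,l_i} into ⟨l_i⟩''_j = {s ∈ {1,…,l_i−1} : α_{ii}^{[l_i]} − α_{ij}^{[l_i]} ≥ α_{ii}^{[s]}} and ⟨l_i⟩'_j = {1,…,l_i} \ ⟨l_i⟩''_j. Then for all s', l' ∈ ⟨l_i⟩'_j \ {l_i} with s' < l': α_{ii}^{[l_i]} − α_{ij}^{[l_i]} ≥ α_{ii}^{[s']} − α_{ij}^{[s']} + α_{ij}^{[l']}. -/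
/-!
Write `a = α_{ii}` and `b = α_{ij}`. Whenever `a_q − b_q < a_p` for `p < q`, condition (O1) for the
pair `(p, q)` cannot be attained by the first term of its minimum, so it reads
`a_p + 2 b_q − b_p ≤ a_q`. Applied to `(l', l_i)` this bounds `a_{l'}` from above; with
`b_{l_i} ≥ 0` and `s' ∈ ⟨l_i⟩'_j` the same applies to `(s', l')`, and adding the two bounds gives
the inequality.
-/

/-- Condition (O1) for one pair of cells, with `a l = α_{ii}^{[l]}` and `b l = α_{ij}^{[l]}`. -/
def TINCondition {ι R : Type*} [Preorder ι] [Ring R] [LinearOrder R] (a b : ι → R) : Prop :=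
  ∀ ⦃p q : ι⦄, p < q → a p + min (b q) (2 * b q - b p) ≤ a q

namespace TINCondition

variable {ι R : Type*} [Preorder ι] [CommRing R] [LinearOrder R] [IsStrictOrderedRing R]
  {a b : ι → R}

theorem add_two_mul_sub_le (h : TINCondition a b) {p q : ι} (hpq : p < q)
    (hlt : a q < a p + b q) : a p + (2 * b q - b p) ≤ a q := by
  have hmin := h hpq
  rw [← min_add_add_left] at hmin
  exact (min_le_iff.mp hmin).resolve_left hlt.not_ge

theorem sub_add_le_sub {s l m : ι} (h : TINCondition a b) (hsl : s < l) (hlm : l < m)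
    (hbm : 0 ≤ b m) (hs : a m - b m < a s) (hl : a m - b m < a l) :
    a s - b s + b l ≤ a m - b m := by
  have hlm' : a l + (2 * b m - b l) ≤ a m := h.add_two_mul_sub_le hlm (by linarith)
  have hsl' : a s + (2 * b l - b s) ≤ a l := h.add_two_mul_sub_le hsl (by linarith)
  linarith

end TINCondition

theorem partition_inequality_general {K : ℕ}
    (L : Fin K → ℕ)
    (α : (k : Fin K) → Fin (L k) → Fin K → ℝ)
    (hα : ∀ (k : Fin K) (l : Fin (L k)) (i : Fin K), 0 ≤ α k l i)
    (hO1 : ∀ (i j : Fin K), j ≠ i → ∀ (l' l : Fin (L i)), l' < l →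
      α i l' i + min (α i l j) (2 * α i l j - α i l' j) ≤ α i l i)
    (i j : Fin K) (hij : i ≠ j)
    (li s' l' : Fin (L i))
    (hsl : s' < l') (hlli : l' < li)
    (hs'mem : α i li i - α i li j < α i s' i)
    (hl'mem : α i li i - α i li j < α i l' i) :
    α i s' i - α i s' j + α i l' j ≤ α i li i - α i li j :=
  TINCondition.sub_add_le_sub (hO1 i j hij.symm) hsl hlli (hα i li j) hs'mem hl'mem

/-- **Lemma 5 of the paper (Section 6, partition inequality).**
Assume (O1) and fix cells `i ≠ j` and `l_i`. Partition `{1,…,l_i}` into the weak group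
`⟨l_i⟩''_j = {s < l_i : α_{ii}^{[l_i]} − α_{ij}^{[l_i]} ≥ α_{ii}^{[s]}}` and its
complement `⟨l_i⟩'_j`. Then for all `s' < l'` in `⟨l_i⟩'_j \ {l_i}` (membership being
expressed by `s' < l_i`, `l' < l_i` and the strict inequalities below):
`α_{ii}^{[l_i]} − α_{ij}^{[l_i]} ≥ α_{ii}^{[s']} − α_{ij}^{[s']} + α_{ij}^{[l']}`. -/
theorem partition_inequality {K : ℕ} (hK : 2 ≤ K)
    (L : Fin K → ℕ) (hL : ∀ k, 1 ≤ L k)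
    (α : (k : Fin K) → Fin (L k) → Fin K → ℝ)
    (hα : ∀ (k : Fin K) (l : Fin (L k)) (i : Fin K), 0 ≤ α k l i)
    (hmono : ∀ k : Fin K, Monotone (fun l : Fin (L k) => α k l k))
    (hO1 : ∀ (i j : Fin K), j ≠ i → ∀ (l' l : Fin (L i)), l' < l →
      α i l' i + min (α i l j) (2 * α i l j - α i l' j) ≤ α i l i)
    (i j : Fin K) (hij : i ≠ j)
    (li s' l' : Fin (L i))
    (hsl : s' < l') (hlli : l' < li)
    (hs'mem : α i li i - α i li j < α i s' i)
    (hl'mem : α i li i - α i li j < α i l' i) :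
    α i s' i - α i s' j + α i l' j ≤ α i li i - α i li j :=
  partition_inequality_general L α hα hO1 i j hij li s' l' hsl hlli hs'mem hl'mem
end
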